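/- (Asymptotic convergence of the dense hierarchy, Proposition 1 (a)–(b) in dense form.) Let f, g_1, …, g_m be real polynomials in n variables such that the Archimedean condition holds (there exist N ∈ ℝ and SOS polynomials τ_0, …, τ_m with N − Σ_{i=1}^n x_i² = τ_0 + Σ_i τ_i·g_i) and such that S_G is nonempty. Let f* = inf_{x ∈ S_G} f(x), which is finite since S_G is compact under the Archimedean condition. Then for every ε > 0 there exist SOS polynomials σ_0, …, σ_m with f − (f* − ε) = σ_0 + Σ_{i=1}^m σ_i·g_i. Consequently the supremum over all hierarchy levels r of the level-r SOS relaxation value equals f*, and the hierarchy values increase monotonically to the global minimum. -/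

import Mathlib

/-!
The certificates `σ₀ + ∑ σᵢ gᵢ` form the quadratic module `M` generated by the `gᵢ`, and every
certified value `φ` is a lower bound of `f` on `S_G`, so the supremum is at most `f*`. The
Archimedean condition makes `M` Archimedean, because the `p` with `N - p² ∈ M` for some real `N`
form a subalgebra containing every `Xᵢ`. Putinar's Positivstellensatz applied to `f - f* + ε`,
which is positive on `S_G`, then gives the certificates.

Putinar's theorem is proved along the lines of Jacobi and Marshall. If `a ∉ M`, then `-1` is not in
`M - Σ²·a`, since an Archimedean quadratic module containing `σ b - 1` with `σ` a sum of squares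
contains `b`. Zorn's lemma extends `M - Σ²·a` to a maximal quadratic module `T` without `-1`;
maximality gives `T ∪ -T = A`, and then `p ↦ inf {r | r - p ∈ T}` is an `ℝ`-algebra homomorphism,
i.e. evaluation at a point of `S_G` where `a ≤ 0`.
-/

open MvPolynomial

/-- A polynomial is a sum of squares (SOS). -/
def IsSOS {n : ℕ} (σ : MvPolynomial (Fin n) ℝ) : Prop :=
  ∃ (k : ℕ) (h : Fin k → MvPolynomial (Fin n) ℝ), σ = ∑ j, h j ^ 2

open scoped algebraMap

variable {A : Type*}

@[simp, norm_cast]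
theorem algebraMap.coe_ofNat {R : Type*} [CommSemiring R] [Semiring A] [Algebra R A] (n : ℕ)
    [n.AtLeastTwo] : ((ofNat(n) : R) : A) = ofNat(n) :=
  map_ofNat (algebraMap R A) n

theorem IsSumSq.map {B F : Type*} [Semiring A] [Semiring B] [FunLike F A B]
    [RingHomClass F A B] (f : F) {s : A} (hs : IsSumSq s) : IsSumSq (f s) := by
  induction hs with
  | zero => rw [map_zero]; exact .zero
  | sq_add a _ ih => rw [map_add, map_mul]; exact .sq_add _ ih

theorem isSOS_iff_isSumSq {n : ℕ} {σ : MvPolynomial (Fin n) ℝ} : IsSOS σ ↔ IsSumSq σ := by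
  constructor
  · rintro ⟨k, h, rfl⟩
    exact IsSumSq.sum_sq _ _
  · intro hσ
    induction hσ with
    | zero => exact ⟨0, ![], by simp⟩
    | sq_add a _ ih =>
      obtain ⟨k, h, rfl⟩ := ih
      exact ⟨k + 1, Fin.cons a h, by simp [Fin.sum_univ_succ, sq]⟩

structure IsQuadraticModule [CommRing A] (M : Set A) : Prop where
  one_mem : 1 ∈ M
  add_mem {u v : A} : u ∈ M → v ∈ M → u + v ∈ M
  sq_mul_mem (p : A) {u : A} : u ∈ M → p ^ 2 * u ∈ M

def addSumSqMul [CommRing A] (M : Set A) (a : A) : Set A :=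
  {u | ∃ v ∈ M, ∃ σ, IsSumSq σ ∧ u = v + σ * a}

theorem subset_addSumSqMul [CommRing A] {M : Set A} (a : A) : M ⊆ addSumSqMul M a :=
  fun v hv => ⟨v, hv, 0, .zero, by ring⟩

namespace IsQuadraticModule

section CommRing

variable [CommRing A] {M : Set A}

theorem sq_mem (hM : IsQuadraticModule M) (p : A) : p ^ 2 ∈ M := by
  simpa using hM.sq_mul_mem p hM.one_mem

theorem zero_mem (hM : IsQuadraticModule M) : (0 : A) ∈ M := by
  simpa using hM.sq_mem 0

theorem isSumSq_mul_mem (hM : IsQuadraticModule M) {σ u : A} (hσ : IsSumSq σ) (hu : u ∈ M) :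
    σ * u ∈ M := by
  induction hσ with
  | zero => simpa using hM.zero_mem
  | sq_add a _ ih => rw [add_mul, ← sq]; exact hM.add_mem (hM.sq_mul_mem a hu) ih

theorem isSumSq_mem (hM : IsQuadraticModule M) {σ : A} (hσ : IsSumSq σ) : σ ∈ M := by
  simpa using hM.isSumSq_mul_mem hσ hM.one_mem

theorem sUnion_of_isChain {c : Set (Set A)} (hc : IsChain (· ⊆ ·) c) (hne : c.Nonempty)
    (h : ∀ T ∈ c, IsQuadraticModule T) : IsQuadraticModule (⋃₀ c) where
  one_mem := by
    obtain ⟨T, hT⟩ := hne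
    exact ⟨T, hT, (h T hT).one_mem⟩
  add_mem := by
    rintro u v ⟨T₁, hT₁, hu⟩ ⟨T₂, hT₂, hv⟩
    rcases hc.total hT₁ hT₂ with h₁₂ | h₂₁
    · exact ⟨T₂, hT₂, (h T₂ hT₂).add_mem (h₁₂ hu) hv⟩
    · exact ⟨T₁, hT₁, (h T₁ hT₁).add_mem hu (h₂₁ hv)⟩
  sq_mul_mem := by
    rintro p u ⟨T, hT, hu⟩
    exact ⟨T, hT, (h T hT).sq_mul_mem p hu⟩

theorem exists_maximal_proper (hM : IsQuadraticModule M) (h : -1 ∉ M) :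
    ∃ T, M ⊆ T ∧ Maximal (fun S : Set A => IsQuadraticModule S ∧ -1 ∉ S) T :=
  zorn_subset_nonempty {T : Set A | IsQuadraticModule T ∧ -1 ∉ T} (fun c hcS hc hne => ⟨⋃₀ c,
    ⟨sUnion_of_isChain hc hne fun _ hT => (hcS hT).1,
      fun ⟨_, hT, hmem⟩ => (hcS hT).2 hmem⟩,
    fun _ => Set.subset_sUnion_of_mem⟩) M ⟨hM, h⟩

theorem addSumSqMul (hM : IsQuadraticModule M) (a : A) :
    IsQuadraticModule (_root_.addSumSqMul M a) where
  one_mem := subset_addSumSqMul a hM.one_mem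
  add_mem := by
    rintro _ _ ⟨v, hv, σ, hσ, rfl⟩ ⟨v', hv', σ', hσ', rfl⟩
    exact ⟨v + v', hM.add_mem hv hv', σ + σ', hσ.add hσ', by ring⟩
  sq_mul_mem := by
    rintro p _ ⟨v, hv, σ, hσ, rfl⟩
    exact ⟨p ^ 2 * v, hM.sq_mul_mem p hv, p ^ 2 * σ, (IsSquare.sq p).isSumSq.mul hσ, by ring⟩

theorem mem_addSumSqMul_self (hM : IsQuadraticModule M) (a : A) :
    a ∈ _root_.addSumSqMul M a :=
  ⟨0, hM.zero_mem, 1, .one, by ring⟩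

end CommRing

section Algebra

variable [CommRing A] [Algebra ℝ A] {M : Set A}

theorem coe_mul_mem (hM : IsQuadraticModule M) {c : ℝ} (hc : 0 ≤ c) {u : A} (hu : u ∈ M) :
    (c : A) * u ∈ M := by
  have : (c : A) = (√c : A) ^ 2 := by rw [← algebraMap.coe_pow, Real.sq_sqrt hc]
  rw [this]
  exact hM.sq_mul_mem _ hu

theorem coe_mem (hM : IsQuadraticModule M) {c : ℝ} (hc : 0 ≤ c) : (c : A) ∈ M := by
  simpa using hM.coe_mul_mem hc hM.one_mem

theorem sub_mem_of_le (hM : IsQuadraticModule M) {p : A} {c d : ℝ} (hcd : c ≤ d)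
    (h : (c : A) - p ∈ M) : (d : A) - p ∈ M := by
  have : (d : A) - p = ((d - c : ℝ) : A) + ((c : A) - p) := by push_cast; ring
  rw [this]
  exact hM.add_mem (hM.coe_mem (sub_nonneg.2 hcd)) h

theorem sub_sq_mem (hM : IsQuadraticModule M) {p : A} {k : ℝ} (hk : 0 < k)
    (h₁ : (k : A) - p ∈ M) (h₂ : (k : A) + p ∈ M) : ((k ^ 2 : ℝ) : A) - p ^ 2 ∈ M := by
  have hinv : (((2 * k)⁻¹ : ℝ) : A) * (2 * k) = 1 := by
    have h2k : ((2 * k : ℝ) : A) = 2 * k := by push_cast; ring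
    rw [← h2k, ← algebraMap.coe_mul, inv_mul_cancel₀ (by positivity), algebraMap.coe_one]
  -- `(k + p)(k - p)((k + p) + (k - p)) = 2k (k² - p²)`
  have key : ((k ^ 2 : ℝ) : A) - p ^ 2 = (((2 * k)⁻¹ : ℝ) : A) *
      (((k : A) + p) ^ 2 * ((k : A) - p) + ((k : A) - p) ^ 2 * ((k : A) + p)) := by
    rw [algebraMap.coe_pow]
    linear_combination (p ^ 2 - (k : A) ^ 2) * hinv
  rw [key]
  exact hM.coe_mul_mem (by positivity) (hM.add_mem (hM.sq_mul_mem _ h₁) (hM.sq_mul_mem _ h₂))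

/-- Bounding `p²` rather than `±p` makes closure under products a one-line identity. -/
def boundedSubalgebra (hM : IsQuadraticModule M) : Subalgebra ℝ A where
  carrier := {p | ∃ N : ℝ, (N : A) - p ^ 2 ∈ M}
  mul_mem' := by
    rintro p q ⟨N, hN⟩ ⟨K, hK⟩
    have hN' := hM.sub_mem_of_le (le_max_left N 0) hN
    refine ⟨max N 0 * K, ?_⟩
    have : ((max N 0 * K : ℝ) : A) - (p * q) ^ 2 =
        q ^ 2 * (((max N 0 : ℝ) : A) - p ^ 2) + ((max N 0 : ℝ) : A) * ((K : A) - q ^ 2) := by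
      push_cast; ring
    rw [this]
    exact hM.add_mem (hM.sq_mul_mem q hN') (hM.coe_mul_mem (le_max_right N 0) hK)
  add_mem' := by
    rintro p q ⟨N, hN⟩ ⟨K, hK⟩
    refine ⟨2 * N + 2 * K, ?_⟩
    have : ((2 * N + 2 * K : ℝ) : A) - (p + q) ^ 2 = ((N : A) - p ^ 2) + ((N : A) - p ^ 2) +
        (((K : A) - q ^ 2) + ((K : A) - q ^ 2)) + (p - q) ^ 2 := by
      push_cast; ring
    rw [this]
    exact hM.add_mem (hM.add_mem (hM.add_mem hN hN) (hM.add_mem hK hK)) (hM.sq_mem _)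
  algebraMap_mem' r := ⟨r ^ 2, by simpa using hM.zero_mem⟩

theorem exists_sub_mem_of_mem_boundedSubalgebra (hM : IsQuadraticModule M) {p : A}
    (hp : p ∈ hM.boundedSubalgebra) : ∃ N : ℝ, (N : A) - p ∈ M := by
  obtain ⟨N, hN⟩ := hp
  refine ⟨N + 2⁻¹ ^ 2, ?_⟩
  have h2 : ((2⁻¹ : ℝ) : A) * 2 = 1 := by
    rw [← algebraMap.coe_ofNat (R := ℝ) (A := A) 2, ← algebraMap.coe_mul]
    norm_num
  have : ((N + 2⁻¹ ^ 2 : ℝ) : A) - p = ((N : A) - p ^ 2) + (p - ((2⁻¹ : ℝ) : A)) ^ 2 := by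
    rw [algebraMap.coe_add, algebraMap.coe_pow]
    linear_combination p * h2
  rw [this]
  exact hM.add_mem hN (hM.sq_mem _)

end Algebra

end IsQuadraticModule

section Archimedean

variable [CommRing A] [Algebra ℝ A] {M : Set A}

structure IsArchimedeanQuadraticModule (M : Set A) : Prop extends IsQuadraticModule M where
  exists_sub_mem (p : A) : ∃ N : ℝ, (N : A) - p ∈ M

theorem IsQuadraticModule.coe_sub_add_mem_of_coe_add_mem (hM : IsQuadraticModule M) {σ b : A}
    {k k₂ t c : ℝ} (hσ : IsSumSq σ) (h : σ * b - 1 ∈ M) (hk : (k : A) - σ ∈ M)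
    (hk₂ : (k₂ : A) - σ ^ 2 * b ∈ M) (ht : 0 < t) (htk : t * k ≤ 1) (htk₂ : t * k₂ ≤ 1)
    (hc : 0 ≤ c) (hcb : (c : A) + b ∈ M) : ((c - t : ℝ) : A) + b ∈ M := by
  have key : ((c - t : ℝ) : A) + b =
      (1 - (t : A) * σ) ^ 2 * ((c : A) + b) + ((c * t * (2 - t * k) : ℝ) : A) * σ +
      ((c * t ^ 2 : ℝ) : A) * (σ * ((k : A) - σ)) + ((2 * t : ℝ) : A) * (σ * b - 1) +
      ((t ^ 2 : ℝ) : A) * ((k₂ : A) - σ ^ 2 * b) + ((t - t ^ 2 * k₂ : ℝ) : A) := by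
    push_cast; ring
  rw [key]
  refine hM.add_mem (hM.add_mem (hM.add_mem (hM.add_mem (hM.add_mem
    (hM.sq_mul_mem _ hcb) ?_) ?_) ?_) ?_) (hM.coe_mem ?_)
  · exact hM.coe_mul_mem (by have := mul_nonneg hc ht.le; nlinarith) (hM.isSumSq_mem hσ)
  · exact hM.coe_mul_mem (by positivity) (hM.isSumSq_mul_mem hσ hk)
  · exact hM.coe_mul_mem (by positivity) h
  · exact hM.coe_mul_mem (by positivity) hk₂
  · nlinarith

namespace IsArchimedeanQuadraticModule

theorem mem_of_isSumSq_mul_sub_one_mem (hM : IsArchimedeanQuadraticModule M) {σ b : A}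
    (hσ : IsSumSq σ) (h : σ * b - 1 ∈ M) : b ∈ M := by
  obtain ⟨k, hk⟩ := hM.exists_sub_mem σ
  obtain ⟨k₂, hk₂⟩ := hM.exists_sub_mem (σ ^ 2 * b)
  obtain ⟨N, hN⟩ := hM.exists_sub_mem (-b)
  set K := max (max k k₂) 1
  have hK : 0 < K := lt_of_lt_of_le one_pos (le_max_right _ _)
  have ht : 0 < K⁻¹ := inv_pos.2 hK
  have htk : K⁻¹ * k ≤ 1 := by
    rw [inv_mul_le_iff₀ hK, mul_one]; exact (le_max_left _ _).trans (le_max_left _ _)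
  have htk₂ : K⁻¹ * k₂ ≤ 1 := by
    rw [inv_mul_le_iff₀ hK, mul_one]; exact (le_max_right _ _).trans (le_max_left _ _)
  have of_neg : ∀ c : ℝ, c < 0 → (c : A) + b ∈ M → b ∈ M := fun c hc hcb => by
    have : b = ((c : A) + b) + ((-c : ℝ) : A) := by push_cast; ring
    rw [this]
    exact hM.add_mem hcb (hM.coe_mem (by linarith))
  -- lower the constant in `N + b ∈ M` by steps of `K⁻¹` until it is negative
  have descent : ∀ j : ℕ, ∀ c : ℝ, c < j * K⁻¹ → (c : A) + b ∈ M → b ∈ M := by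
    intro j
    induction j with
    | zero => intro c hc; exact of_neg c (by simpa using hc)
    | succ j ih =>
      intro c hc hcb
      by_cases hc0 : c < 0
      · exact of_neg c hc0 hcb
      · exact ih (c - K⁻¹) (by push_cast at hc; linarith) <|
          hM.coe_sub_add_mem_of_coe_add_mem hσ h hk hk₂ ht htk htk₂ (not_lt.1 hc0) hcb
  obtain ⟨j, hj⟩ := exists_nat_gt (N / K⁻¹)
  exact descent j N (by rwa [div_lt_iff₀ ht] at hj) (by rwa [sub_neg_eq_add] at hN)

theorem neg_mem_of_neg_one_mem_addSumSqMul (hM : IsArchimedeanQuadraticModule M) {a : A}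
    (h : -1 ∈ addSumSqMul M a) : -a ∈ M := by
  obtain ⟨v, hv, σ, hσ, hv_eq⟩ := h
  refine hM.mem_of_isSumSq_mul_sub_one_mem hσ ?_
  have : σ * -a - 1 = v := by linear_combination hv_eq
  rwa [this]

end IsArchimedeanQuadraticModule

end Archimedean

section Total

variable [CommRing A] [Algebra ℝ A]

structure IsTotalArchimedeanQuadraticModule (T : Set A) : Prop
    extends IsArchimedeanQuadraticModule T where
  neg_one_notMem : -1 ∉ T
  mem_or_neg_mem (b : A) : b ∈ T ∨ -b ∈ T

variable {M T : Set A}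

theorem IsArchimedeanQuadraticModule.isTotal_of_maximal (hM : IsArchimedeanQuadraticModule M)
    (hMT : M ⊆ T) (hT : Maximal (fun S : Set A => IsQuadraticModule S ∧ -1 ∉ S) T) :
    IsTotalArchimedeanQuadraticModule T := by
  have hTarch : IsArchimedeanQuadraticModule T :=
    ⟨hT.prop.1, fun p => (hM.exists_sub_mem p).imp fun _ hN => hMT hN⟩
  refine ⟨hTarch, hT.prop.2, fun b => or_iff_not_imp_left.2 fun hb => ?_⟩
  -- by maximality, adjoining `b ∉ T` forces `-1 ∈ T + Σ²·b`
  refine hTarch.neg_mem_of_neg_one_mem_addSumSqMul (not_not.1 fun h => hb ?_)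
  exact hT.le_of_ge ⟨hT.prop.1.addSumSqMul b, h⟩ (subset_addSumSqMul b)
    (hT.prop.1.mem_addSumSqMul_self b)

noncomputable def infUpperBound (T : Set A) (p : A) : ℝ :=
  sInf {r : ℝ | (r : A) - p ∈ T}

namespace IsTotalArchimedeanQuadraticModule

variable {p : A}

theorem coe_notMem_of_neg (hT : IsTotalArchimedeanQuadraticModule T) {c : ℝ} (hc : c < 0) :
    (c : A) ∉ T := fun h => hT.neg_one_notMem <| by
  have := hT.coe_mul_mem (inv_nonneg.2 (neg_nonneg.2 hc.le)) h
  rwa [← algebraMap.coe_mul, inv_mul_eq_div, div_neg_self hc.ne, algebraMap.coe_neg,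
    algebraMap.coe_one] at this

theorem bddBelow_upper (hT : IsTotalArchimedeanQuadraticModule T) (p : A) :
    BddBelow {r : ℝ | (r : A) - p ∈ T} := by
  obtain ⟨N, hN⟩ := hT.exists_sub_mem (-p)
  refine ⟨-N, fun r hr => not_lt.1 fun hlt => hT.coe_notMem_of_neg (c := r + N) (by linarith) ?_⟩
  have : ((r + N : ℝ) : A) = ((r : A) - p) + ((N : A) - -p) := by push_cast; ring
  rw [this]
  exact hT.add_mem hr hN

theorem infUpperBound_le (hT : IsTotalArchimedeanQuadraticModule T) {s : ℝ}
    (h : (s : A) - p ∈ T) : infUpperBound T p ≤ s :=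
  csInf_le (hT.bddBelow_upper p) h

theorem sub_mem_of_infUpperBound_lt (hT : IsTotalArchimedeanQuadraticModule T) {s : ℝ}
    (h : infUpperBound T p < s) : (s : A) - p ∈ T := by
  obtain ⟨r, hr, hrs⟩ := exists_lt_of_csInf_lt (hT.exists_sub_mem p) h
  exact hT.sub_mem_of_le hrs.le hr

theorem sub_mem_of_lt_infUpperBound (hT : IsTotalArchimedeanQuadraticModule T) {r : ℝ}
    (h : r < infUpperBound T p) : p - r ∈ T :=
  (hT.mem_or_neg_mem _).resolve_right fun hr =>
    (hT.infUpperBound_le (by rwa [neg_sub] at hr)).not_gt h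

theorem le_infUpperBound (hT : IsTotalArchimedeanQuadraticModule T) {s : ℝ}
    (h : ∀ r < s, p - r ∈ T) : s ≤ infUpperBound T p := by
  refine le_csInf (hT.exists_sub_mem p) fun q hq => not_lt.1 fun hqs => ?_
  refine hT.coe_notMem_of_neg (c := q - (q + s) / 2) (by linarith) ?_
  have : ((q - (q + s) / 2 : ℝ) : A) = ((q : A) - p) + (p - ((q + s) / 2 : ℝ)) := by
    rw [algebraMap.coe_sub]; ring
  rw [this]
  exact hT.add_mem hq (h _ (by linarith))

theorem infUpperBound_eq (hT : IsTotalArchimedeanQuadraticModule T) {s : ℝ}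
    (h₁ : ∀ r < s, p - r ∈ T) (h₂ : ∀ r, s < r → (r : A) - p ∈ T) : infUpperBound T p = s :=
  le_antisymm (le_of_forall_gt_imp_ge_of_dense fun r hr => hT.infUpperBound_le (h₂ r hr))
    (hT.le_infUpperBound h₁)

theorem infUpperBound_coe (hT : IsTotalArchimedeanQuadraticModule T) (c : ℝ) :
    infUpperBound T c = c :=
  hT.infUpperBound_eq (fun r hr => by rw [← algebraMap.coe_sub]; exact hT.coe_mem (by linarith))
    fun r hr => by rw [← algebraMap.coe_sub]; exact hT.coe_mem (by linarith)

theorem infUpperBound_add (hT : IsTotalArchimedeanQuadraticModule T) (p q : A) :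
    infUpperBound T (p + q) = infUpperBound T p + infUpperBound T q := by
  set a := infUpperBound T p
  set b := infUpperBound T q
  -- the two halves lie on the same side of `a`, resp. `b`, as `r` lies of `a + b`
  have split : ∀ r : ℝ, (r : A) = (((r + a - b) / 2 : ℝ) : A) + (((r - a + b) / 2 : ℝ) : A) :=
    fun r => by rw [← algebraMap.coe_add]; congr 1; ring
  refine hT.infUpperBound_eq (fun r hr => ?_) fun r hr => ?_
  · have hp := hT.sub_mem_of_lt_infUpperBound (p := p) (r := (r + a - b) / 2) (by linarith)
    have hq := hT.sub_mem_of_lt_infUpperBound (p := q) (r := (r - a + b) / 2) (by linarith)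
    rw [split r]
    convert hT.add_mem hp hq using 1
    ring
  · have hp := hT.sub_mem_of_infUpperBound_lt (p := p) (s := (r + a - b) / 2) (by linarith)
    have hq := hT.sub_mem_of_infUpperBound_lt (p := q) (s := (r - a + b) / 2) (by linarith)
    rw [split r]
    convert hT.add_mem hp hq using 1
    ring

theorem infUpperBound_nonneg (hT : IsTotalArchimedeanQuadraticModule T) {u : A} (hu : u ∈ T) :
    0 ≤ infUpperBound T u :=
  hT.le_infUpperBound fun r hr => by
    have : u - (r : A) = u + ((-r : ℝ) : A) := by push_cast; ring
    rw [this]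
    exact hT.add_mem hu (hT.coe_mem (by linarith))

theorem infUpperBound_neg (hT : IsTotalArchimedeanQuadraticModule T) (p : A) :
    infUpperBound T (-p) = -infUpperBound T p := by
  have h0 : infUpperBound T 0 = 0 := by simpa using hT.infUpperBound_coe 0
  have := hT.infUpperBound_add p (-p)
  rw [add_neg_cancel, h0] at this
  linarith

theorem infUpperBound_coe_mul_of_pos (hT : IsTotalArchimedeanQuadraticModule T) {c : ℝ}
    (hc : 0 < c) (p : A) : infUpperBound T (c * p) = c * infUpperBound T p := by
  have hcr : ∀ r : ℝ, (c : A) * ((r / c : ℝ) : A) = r := fun r => by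
    rw [← algebraMap.coe_mul, mul_div_cancel₀ r hc.ne']
  refine hT.infUpperBound_eq (fun r hr => ?_) fun r hr => ?_
  · have := hT.coe_mul_mem hc.le (hT.sub_mem_of_lt_infUpperBound (p := p) (r := r / c)
      (by rwa [div_lt_iff₀' hc]))
    rwa [mul_sub, hcr] at this
  · have := hT.coe_mul_mem hc.le (hT.sub_mem_of_infUpperBound_lt (p := p) (s := r / c)
      (by rwa [lt_div_iff₀' hc]))
    rwa [mul_sub, hcr] at this

theorem infUpperBound_coe_mul (hT : IsTotalArchimedeanQuadraticModule T) (c : ℝ) (p : A) :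
    infUpperBound T (c * p) = c * infUpperBound T p := by
  rcases lt_trichotomy c 0 with hc | rfl | hc
  · have : (c : A) * p = ((-c : ℝ) : A) * -p := by push_cast; ring
    rw [this, hT.infUpperBound_coe_mul_of_pos (neg_pos.2 hc), hT.infUpperBound_neg]
    ring
  · simpa using hT.infUpperBound_coe 0
  · exact hT.infUpperBound_coe_mul_of_pos hc p

theorem infUpperBound_sq (hT : IsTotalArchimedeanQuadraticModule T) (p : A) :
    infUpperBound T (p ^ 2) = infUpperBound T p ^ 2 := by
  set v := infUpperBound T p
  refine le_antisymm (le_of_forall_gt_imp_ge_of_dense fun w hw => ?_) ?_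
  · have hv : |v| < √w := (Real.lt_sqrt (abs_nonneg v)).2 (by rwa [sq_abs])
    have h₁ := hT.sub_mem_of_infUpperBound_lt (p := p) ((le_abs_self v).trans_lt hv)
    have h₂ := hT.sub_mem_of_infUpperBound_lt (p := -p)
      (by rw [hT.infUpperBound_neg]; exact (neg_le_abs v).trans_lt hv)
    rw [sub_neg_eq_add] at h₂
    have := hT.infUpperBound_le (hT.sub_sq_mem ((abs_nonneg v).trans_lt hv) h₁ h₂)
    rwa [Real.sq_sqrt (by nlinarith)] at this
  · have : p ^ 2 = (p - v) ^ 2 + ((2 * v : ℝ) : A) * p + ((-v ^ 2 : ℝ) : A) := by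
      push_cast; ring
    rw [this, hT.infUpperBound_add, hT.infUpperBound_add, hT.infUpperBound_coe_mul,
      hT.infUpperBound_coe]
    nlinarith [hT.infUpperBound_nonneg (hT.sq_mem (p - v))]

theorem infUpperBound_mul (hT : IsTotalArchimedeanQuadraticModule T) (p q : A) :
    infUpperBound T (p * q) = infUpperBound T p * infUpperBound T q := by
  have h : ((4 : ℝ) : A) * (p * q) =
      (p + q) ^ 2 + ((-1 : ℝ) : A) * (p + ((-1 : ℝ) : A) * q) ^ 2 := by
    push_cast; ring
  have := congrArg (infUpperBound T) h
  simp only [hT.infUpperBound_coe_mul, hT.infUpperBound_add, hT.infUpperBound_sq] at this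
  linear_combination this / 4

noncomputable def toAlgHom (hT : IsTotalArchimedeanQuadraticModule T) : A →ₐ[ℝ] ℝ where
  toFun := infUpperBound T
  map_one' := by simpa using hT.infUpperBound_coe 1
  map_mul' := hT.infUpperBound_mul
  map_zero' := by simpa using hT.infUpperBound_coe 0
  map_add' := hT.infUpperBound_add
  commutes' := hT.infUpperBound_coe

theorem toAlgHom_nonneg (hT : IsTotalArchimedeanQuadraticModule T) {u : A} (hu : u ∈ T) :
    0 ≤ hT.toAlgHom u :=
  hT.infUpperBound_nonneg hu

end IsTotalArchimedeanQuadraticModule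

theorem IsArchimedeanQuadraticModule.mem_of_forall_algHom_pos
    (hM : IsArchimedeanQuadraticModule M) {a : A}
    (ha : ∀ ψ : A →ₐ[ℝ] ℝ, (∀ u ∈ M, 0 ≤ ψ u) → 0 < ψ a) : a ∈ M := by
  by_contra haM
  have hproper : -1 ∉ addSumSqMul M (-a) := fun h =>
    haM (by simpa using hM.neg_mem_of_neg_one_mem_addSumSqMul h)
  obtain ⟨T, hMT, hTmax⟩ := (hM.addSumSqMul (-a)).exists_maximal_proper hproper
  have hT := hM.isTotal_of_maximal ((subset_addSumSqMul (-a)).trans hMT) hTmax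
  have hpos := ha hT.toAlgHom fun u hu => hT.toAlgHom_nonneg (hMT (subset_addSumSqMul (-a) hu))
  have hneg := hT.toAlgHom_nonneg (hMT (hM.mem_addSumSqMul_self (-a)))
  rw [map_neg] at hneg
  linarith

end Total

section Closure

variable [CommRing A] {ι : Type*} [Fintype ι]

def quadraticModuleClosure (g : ι → A) : Set A :=
  {u | ∃ (σ₀ : A) (σ : ι → A), IsSumSq σ₀ ∧ (∀ i, IsSumSq (σ i)) ∧ u = σ₀ + ∑ i, σ i * g i}

theorem isQuadraticModule_quadraticModuleClosure (g : ι → A) :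
    IsQuadraticModule (quadraticModuleClosure g) where
  one_mem := ⟨1, 0, .one, fun _ => .zero, by simp⟩
  add_mem := by
    rintro _ _ ⟨σ₀, σ, h₀, h, rfl⟩ ⟨τ₀, τ, h₀', h', rfl⟩
    refine ⟨σ₀ + τ₀, σ + τ, h₀.add h₀', fun i => (h i).add (h' i), ?_⟩
    simp only [Pi.add_apply, add_mul, Finset.sum_add_distrib]
    ring
  sq_mul_mem := by
    rintro p _ ⟨σ₀, σ, h₀, h, rfl⟩
    refine ⟨p ^ 2 * σ₀, fun i => p ^ 2 * σ i, (IsSquare.sq p).isSumSq.mul h₀,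
      fun i => (IsSquare.sq p).isSumSq.mul (h i), ?_⟩
    simp only [mul_add, Finset.mul_sum, mul_assoc]

theorem mem_quadraticModuleClosure (g : ι → A) (i : ι) : g i ∈ quadraticModuleClosure g := by
  classical
  refine ⟨0, Pi.single i 1, .zero, fun j => ?_, by simp [Pi.single_apply]⟩
  by_cases h : j = i <;> simp [h]

theorem nonneg_of_mem_quadraticModuleClosure {B F : Type*} [CommRing B] [LinearOrder B]
    [IsStrictOrderedRing B] [FunLike F A B] [RingHomClass F A B] (ψ : F) {g : ι → A}
    (hg : ∀ i, 0 ≤ ψ (g i)) {u : A} (hu : u ∈ quadraticModuleClosure g) : 0 ≤ ψ u := by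
  obtain ⟨σ₀, σ, h₀, h, rfl⟩ := hu
  rw [map_add, map_sum]
  refine add_nonneg (h₀.map ψ).nonneg (Finset.sum_nonneg fun i _ => ?_)
  rw [map_mul]
  exact mul_nonneg ((h i).map ψ).nonneg (hg i)

end Closure

namespace MvPolynomial

variable {σ : Type*} {M : Set (MvPolynomial σ ℝ)}

theorem isArchimedeanQuadraticModule_of_sub_sum_sq_mem [Fintype σ] (hM : IsQuadraticModule M)
    {N : ℝ} (h : C N - ∑ i, X i ^ 2 ∈ M) : IsArchimedeanQuadraticModule M := by
  classical
  have hX : Set.range X ⊆ (hM.boundedSubalgebra : Set (MvPolynomial σ ℝ)) := by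
    rintro _ ⟨i, rfl⟩
    refine ⟨N, ?_⟩
    have : (N : MvPolynomial σ ℝ) - X i ^ 2 =
        (C N - ∑ j, X j ^ 2) + ∑ j ∈ Finset.univ.erase i, X j ^ 2 := by
      rw [← Finset.add_sum_erase _ _ (Finset.mem_univ i)]
      rw [show ((N : ℝ) : MvPolynomial σ ℝ) = C N from rfl]
      ring
    rw [this]
    exact hM.add_mem h (hM.isSumSq_mem (IsSumSq.sum_sq _ _))
  refine ⟨hM, fun p => hM.exists_sub_mem_of_mem_boundedSubalgebra ?_⟩
  exact Algebra.adjoin_le hX (adjoin_range_X (R := ℝ) ▸ Algebra.mem_top)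

theorem mem_of_forall_eval_pos (hM : IsArchimedeanQuadraticModule M) {a : MvPolynomial σ ℝ}
    (ha : ∀ x : σ → ℝ, (∀ u ∈ M, 0 ≤ eval x u) → 0 < eval x a) : a ∈ M :=
  hM.mem_of_forall_algHom_pos fun ψ hψ => by
    have hψx : ∀ p, ψ p = eval (fun i => ψ (X i)) p := fun p => DFunLike.congr_fun
      (algHom_ext fun i => (aeval_X (fun i => ψ (X i)) i).symm : ψ = aeval fun i => ψ (X i)) p
    rw [hψx]
    exact ha _ fun u hu => hψx u ▸ hψ u hu

end MvPolynomial

theorem dense_hierarchy_converges_general {n m : ℕ}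
    (f : MvPolynomial (Fin n) ℝ) (g : Fin m → MvPolynomial (Fin n) ℝ)
    (harch : ∃ (N : ℝ) (τ₀ : MvPolynomial (Fin n) ℝ)
        (τ : Fin m → MvPolynomial (Fin n) ℝ),
      IsSOS τ₀ ∧ (∀ i, IsSOS (τ i)) ∧
      C N - ∑ i : Fin n, X i ^ 2 = τ₀ + ∑ i, τ i * g i)
    (fstar : ℝ)
    (hfstar : IsGLB {y : ℝ | ∃ x : Fin n → ℝ,
      (∀ i, 0 ≤ eval x (g i)) ∧ eval x f = y} fstar) :
    (∀ ε : ℝ, 0 < ε →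
      ∃ (σ₀ : MvPolynomial (Fin n) ℝ) (σ : Fin m → MvPolynomial (Fin n) ℝ),
        IsSOS σ₀ ∧ (∀ i, IsSOS (σ i)) ∧
        f - C (fstar - ε) = σ₀ + ∑ i, σ i * g i) ∧
    sSup {φ : ℝ | ∃ (σ₀ : MvPolynomial (Fin n) ℝ)
        (σ : Fin m → MvPolynomial (Fin n) ℝ),
      IsSOS σ₀ ∧ (∀ i, IsSOS (σ i)) ∧ f - C φ = σ₀ + ∑ i, σ i * g i} = fstar := by
  simp only [isSOS_iff_isSumSq]
  change (∀ ε : ℝ, 0 < ε → f - C (fstar - ε) ∈ quadraticModuleClosure g) ∧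
    sSup {φ : ℝ | f - C φ ∈ quadraticModuleClosure g} = fstar
  obtain ⟨N, τ₀, τ, hτ₀, hτ, hN⟩ := harch
  have hM : IsArchimedeanQuadraticModule (quadraticModuleClosure g) :=
    isArchimedeanQuadraticModule_of_sub_sum_sq_mem (isQuadraticModule_quadraticModuleClosure g)
      (by rw [hN]; exact ⟨τ₀, τ, isSOS_iff_isSumSq.1 hτ₀, fun i => isSOS_iff_isSumSq.1 (hτ i), rfl⟩)
  have hcert : ∀ ε : ℝ, 0 < ε → f - C (fstar - ε) ∈ quadraticModuleClosure g := fun ε hε =>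
    mem_of_forall_eval_pos hM fun x hx => by
      have := hfstar.1 ⟨x, fun i => hx _ (mem_quadraticModuleClosure g i), rfl⟩
      rw [map_sub, eval_C]
      linarith
  have hle : ∀ φ ∈ {φ : ℝ | f - C φ ∈ quadraticModuleClosure g}, φ ≤ fstar := fun φ hφ =>
    hfstar.2 <| by
      rintro _ ⟨x, hx, rfl⟩
      have := nonneg_of_mem_quadraticModuleClosure (eval x) hx hφ
      rw [map_sub, eval_C] at this
      linarith
  exact ⟨hcert, csSup_eq_of_forall_le_of_forall_lt_exists_gt ⟨_, hcert 1 one_pos⟩ hle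
    fun w hw => ⟨fstar - (fstar - w) / 2, hcert _ (by linarith), by linarith⟩⟩

/-- Asymptotic convergence of the dense hierarchy: under the Archimedean condition and
nonemptiness of `S_G`, with `f* = inf_{x ∈ S_G} f(x)`, for every `ε > 0` the value
`f* − ε` admits an SOS certificate, and the supremum over all hierarchy levels of the
relaxation values (i.e. over all `φ` admitting some SOS certificate) equals `f*`. -/
theorem dense_hierarchy_converges {n m : ℕ}
    (f : MvPolynomial (Fin n) ℝ) (g : Fin m → MvPolynomial (Fin n) ℝ)
    (harch : ∃ (N : ℝ) (τ₀ : MvPolynomial (Fin n) ℝ)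
        (τ : Fin m → MvPolynomial (Fin n) ℝ),
      IsSOS τ₀ ∧ (∀ i, IsSOS (τ i)) ∧
      C N - ∑ i : Fin n, X i ^ 2 = τ₀ + ∑ i, τ i * g i)
    (hne : ∃ x : Fin n → ℝ, ∀ i, 0 ≤ eval x (g i))
    (fstar : ℝ)
    (hfstar : IsGLB {y : ℝ | ∃ x : Fin n → ℝ,
      (∀ i, 0 ≤ eval x (g i)) ∧ eval x f = y} fstar) :
    (∀ ε : ℝ, 0 < ε →
      ∃ (σ₀ : MvPolynomial (Fin n) ℝ) (σ : Fin m → MvPolynomial (Fin n) ℝ),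
        IsSOS σ₀ ∧ (∀ i, IsSOS (σ i)) ∧
        f - C (fstar - ε) = σ₀ + ∑ i, σ i * g i) ∧
    sSup {φ : ℝ | ∃ (σ₀ : MvPolynomial (Fin n) ℝ)
        (σ : Fin m → MvPolynomial (Fin n) ℝ),
      IsSOS σ₀ ∧ (∀ i, IsSOS (σ i)) ∧ f - C φ = σ₀ + ∑ i, σ i * g i} = fstar :=
  dense_hierarchy_converges_general f g harch fstar hfstar
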